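/- Let u_T : ℝⁿ → ℝ be Lipschitz with I_T(u_T) nonempty, and let u0 ∈ I_T(u_T). Then for any x0 ∈ ℝⁿ, the following are equivalent: (1) x0 ∈ X_T(u_T); (2) there exist p0 ∈ D⁻u0(x0) and c0 ∈ ℝ such that u0(x0) = −T·L(∇H(p0)) + c0 and u0(x) > −T·L(∇H(p0) + (x0 − x)/T) + c0 for all x ∈ ℝⁿ with x ≠ x0. -/

import Mathlib

open scoped RealInnerProductSpace
open Filter

noncomputable section

/-- `n`-dimensional Euclidean space. -/
abbrev Euc (n : ℕ) := EuclideanSpace ℝ (Fin n)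

/-- A real-valued function on `ℝⁿ` is Lipschitz (with some constant). -/
def IsLip {n : ℕ} (f : Euc n → ℝ) : Prop := ∃ K : NNReal, LipschitzWith K f

/-- The Legendre transform `L(q) = sup_p (⟨q,p⟫ - H(p))`. -/
def legendre {n : ℕ} (H : Euc n → ℝ) (q : Euc n) : ℝ :=
  ⨆ p : Euc n, (⟪q, p⟫ - H p)

/-- The forward Hopf–Lax operator `(S_T^+ g)(x) = inf_y [g(y) + T·L((x-y)/T)]`. -/
def Splus {n : ℕ} (T : ℝ) (L : Euc n → ℝ) (g : Euc n → ℝ) (x : Euc n) : ℝ :=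
  ⨅ y : Euc n, (g y + T * L (T⁻¹ • (x - y)))

/-- The backward operator `(S_T^- g)(x) = sup_y [g(y) - T·L((y-x)/T)]`. -/
def Sminus {n : ℕ} (T : ℝ) (L : Euc n → ℝ) (g : Euc n → ℝ) (x : Euc n) : ℝ :=
  ⨆ y : Euc n, (g y - T * L (T⁻¹ • (y - x)))

/-- The Hessian of `H` is positive definite at every point. -/
def PosDefHessian {n : ℕ} (H : Euc n → ℝ) : Prop :=
  ∀ p v : Euc n, v ≠ 0 → 0 < iteratedFDeriv ℝ 2 H p ![v, v]

/-- `H` is superlinear: `H(p)/‖p‖ → +∞` as `‖p‖ → +∞`. -/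
def Superlinear {n : ℕ} (H : Euc n → ℝ) : Prop :=
  Tendsto (fun p : Euc n => H p / ‖p‖) (cocompact (Euc n)) atTop

/-- The set `X_T(u_T) = { z - T·∇H(∇u_T(z)) : u_T differentiable at z }`. -/
def XT {n : ℕ} (T : ℝ) (H : Euc n → ℝ) (uT : Euc n → ℝ) : Set (Euc n) :=
  {x | ∃ z : Euc n, DifferentiableAt ℝ uT z ∧ x = z - T • gradient H (gradient uT z)}

/-- The subdifferential `D⁻u0(x0)`: the set of `p` such that some `C¹` function `φ` with
`∇φ(x0) = p` touches `u0` from below at `x0`. -/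
def subdiff {n : ℕ} (u0 : Euc n → ℝ) (x0 : Euc n) : Set (Euc n) :=
  {p | ∃ φ : Euc n → ℝ, ContDiff ℝ 1 φ ∧ gradient φ x0 = p ∧
    (∀ x : Euc n, φ x ≤ u0 x) ∧ u0 x0 = φ x0}

/-!
Positive definiteness of the Hessian makes `H` strictly convex, so the supremum defining `L(q)` is
attained at a unique point `m(q)` (superlinearity gives existence), `m` inverts `∇H`, is
continuous, and `m(q)` is a subgradient of `L` at `q`. Thus `u_T(z) = S_T^+ u0 (z)` is the minimum
over `x` of `u0 x + T L((z - x)/T)`.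

If `u_T` is differentiable at `z`, then `z' ↦ u0 x + T L((z' - x)/T)` touches `u_T` from above at
`z` for every minimizer `x`, which forces `∇u_T(z) = m((z - x)/T)`: the minimizer is unique and
equal to `x₀ = z - T ∇H(∇u_T(z))`, and `u_T(z) - T L((z - ·)/T)` touches `u0` from below at `x₀`
with gradient `m(∇H(p₀)) = p₀`.

Conversely, if `x₀` is the unique minimizer for `z = x₀ + T ∇H(p₀)`, then minimizers for nearby
`z'` converge to `x₀` by compactness, and the subgradient inequalities of `L`, applied at the
competitor `x₀` and at these minimizers, squeeze the increments of `u_T` at `z` between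
`⟪h, m(ξ)⟫` and `⟪h, m(ξ')⟫` with `ξ, ξ' → ∇H(p₀)`; hence `∇u_T(z) = p₀`.
-/

open Set Metric Topology

section Calculus

variable {E : Type*} [NormedAddCommGroup E] [InnerProductSpace ℝ E] [CompleteSpace E]

theorem hasGradientAt_of_inner_le_sub_le_inner {f : E → ℝ} {x p : E} {a b : E → E}
    (ha : Tendsto a (𝓝 x) (𝓝 p)) (hb : Tendsto b (𝓝 x) (𝓝 p))
    (hlow : ∀ y, ⟪y - x, a y⟫ ≤ f y - f x) (hup : ∀ y, f y - f x ≤ ⟪y - x, b y⟫) :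
    HasGradientAt f p x := by
  rw [hasGradientAt_iff_isLittleO, Asymptotics.isLittleO_iff]
  intro c hc
  have hclose : ∀ q, dist q p < c → ∀ y : E, |⟪y - x, q⟫ - ⟪p, y - x⟫| ≤ c * ‖y - x‖ := by
    intro q hq y
    rw [← real_inner_comm p, ← inner_sub_right, mul_comm]
    exact (abs_real_inner_le_norm _ _).trans
      (mul_le_mul_of_nonneg_left (dist_eq_norm q p ▸ hq.le) (norm_nonneg _))
  filter_upwards [tendsto_nhds.1 ha c hc, tendsto_nhds.1 hb c hc] with y hay hby
  have h1 := abs_le.1 (hclose _ hay y)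
  have h2 := abs_le.1 (hclose _ hby y)
  rw [Real.norm_eq_abs, abs_le]
  constructor <;> linarith [hlow y, hup y]

theorem HasGradientAt.eq_of_le_of_eq {f g : E → ℝ} {x p q : E}
    (hf : HasGradientAt f p x) (hg : HasGradientAt g q x) (hle : ∀ y, f y ≤ g y)
    (heq : f x = g x) : p = q := by
  have hmin : IsLocalMin (fun y => g y - f y) x :=
    Eventually.of_forall fun y => by simp only [heq, sub_self, sub_nonneg, hle y]
  have h0 := hmin.hasFDerivAt_eq_zero (hg.hasFDerivAt.sub hf.hasFDerivAt)
  exact ((InnerProductSpace.toDual ℝ E).injective (sub_eq_zero.1 h0)).symm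

theorem contDiff_one_of_hasGradientAt {f : E → ℝ} {g : E → E}
    (hg : Continuous g) (hf : ∀ x, HasGradientAt f (g x) x) : ContDiff ℝ 1 f := by
  rw [contDiff_one_iff_fderiv]
  refine ⟨fun x => (hf x).differentiableAt, ?_⟩
  have : fderiv ℝ f = fun x => InnerProductSpace.toDual ℝ E (g x) :=
    funext fun x => (hf x).hasFDerivAt.fderiv
  rw [this]
  exact (InnerProductSpace.toDual ℝ E).continuous.comp hg

end Calculus

theorem exists_forall_le_of_norm_sub_le {E : Type*} [NormedAddCommGroup E] [ProperSpace E]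
    {f : E → ℝ} (hf : Continuous f) {C : ℝ} (hC : ∀ x, ‖x‖ - C ≤ f x) :
    ∃ x, ∀ y, f x ≤ f y :=
  hf.exists_forall_le <| tendsto_atTop_mono hC <| by
    simpa only [sub_eq_add_neg] using
      tendsto_atTop_add_const_right _ (-C) tendsto_norm_cocompact_atTop

theorem tendsto_of_forall_le_of_unique {X Y : Type*} [TopologicalSpace X] [TopologicalSpace Y]
    {F : X → Y → ℝ} (hF : Continuous (Function.uncurry F)) {K : Set Y} (hK : IsCompact K)
    {x : X} {y₀ : Y} {y : X → Y} (hy : ∀ x' b, F x' (y x') ≤ F x' b)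
    (hyK : ∀ᶠ x' in 𝓝 x, y x' ∈ K) (huniq : ∀ b, b ≠ y₀ → F x y₀ < F x b) :
    Tendsto y (𝓝 x) (𝓝 y₀) := by
  refine hK.tendsto_nhds_of_unique_mapClusterPt hyK fun b _ hb => ?_
  by_contra hne
  have hcl : MapClusterPt (x, b) (𝓝 x) fun x' => (x', y x') := by
    rw [((𝓝 x).basis_sets.prod_nhds (𝓝 b).basis_sets).mapClusterPt_iff_frequently]
    rintro ⟨s, t⟩ ⟨hs, ht⟩
    exact ((hb.frequently ht).and_eventually hs).mono fun _ h => ⟨h.2, h.1⟩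
  have hclosed : IsClosed {q : X × Y | F q.1 q.2 ≤ F q.1 y₀} :=
    isClosed_le hF (hF.comp (continuous_fst.prodMk continuous_const))
  exact (huniq b hne).not_ge
    (hclosed.mem_of_mapClusterPt hcl (Eventually.of_forall fun x' => hy x' y₀))

section Legendre

variable {n : ℕ} {H : Euc n → ℝ}

theorem Superlinear.tendsto_sub_mul_norm (hs : Superlinear H) (M : ℝ) :
    Tendsto (fun p => H p - M * ‖p‖) (cocompact (Euc n)) atTop := by
  refine (tendsto_norm_cocompact_atTop.atTop_mul_atTop₀
    (tendsto_atTop_add_const_right _ (-M) hs)).congr' ?_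
  filter_upwards [tendsto_norm_cocompact_atTop.eventually_gt_atTop 0] with p hp
  field_simp
  ring

theorem Superlinear.exists_mul_norm_sub_le (hHc : Continuous H) (hs : Superlinear H) (M : ℝ) :
    ∃ C, ∀ p, M * ‖p‖ - C ≤ H p := by
  obtain ⟨p₀, hp₀⟩ := Continuous.exists_forall_le (f := fun p => H p - M * ‖p‖) (by fun_prop)
    (hs.tendsto_sub_mul_norm M)
  exact ⟨M * ‖p₀‖ - H p₀, fun p => by linarith [hp₀ p]⟩

theorem inner_gradient_lt_sub (hH : ContDiff ℝ 2 H) (hHconv : PosDefHessian H) {p p' : Euc n}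
    (hne : p' ≠ p) : ⟪gradient H p, p' - p⟫ < H p' - H p := by
  obtain ⟨v, rfl⟩ : ∃ v, p' = p + v := ⟨p' - p, by abel⟩
  have hv : v ≠ 0 := by simpa using hne
  have hH1 : Differentiable ℝ H := hH.differentiable (by norm_num)
  have hH2 : Differentiable ℝ (fderiv ℝ H) :=
    (hH.fderiv_right (m := 1) (by norm_num)).differentiable (by norm_num)
  have hline : ∀ t : ℝ, HasDerivAt (fun s : ℝ => p + s • v) v t := fun t => by
    simpa using ((hasDerivAt_id t).smul_const v).const_add p
  have hg' : ∀ t, HasDerivAt (fun s => H (p + s • v)) (fderiv ℝ H (p + t • v) v) t := fun t =>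
    (hH1 _).hasFDerivAt.comp_hasDerivAt t (hline t)
  have hg'' : ∀ t, HasDerivAt (fun s => fderiv ℝ H (p + s • v) v)
      (fderiv ℝ (fderiv ℝ H) (p + t • v) v v) t := fun t =>
    ((ContinuousLinearMap.apply ℝ ℝ v).hasFDerivAt.comp _ (hH2 _).hasFDerivAt).comp_hasDerivAt t
      (hline t)
  have hconv : StrictConvexOn ℝ univ fun s : ℝ => H (p + s • v) := by
    refine strictConvexOn_univ_of_deriv2_pos (hH1.continuous.comp (by fun_prop)) fun t => ?_
    have hd : deriv (fun s : ℝ => H (p + s • v)) = fun s => fderiv ℝ H (p + s • v) v :=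
      funext fun s => (hg' s).deriv
    rw [Function.iterate_succ_apply, Function.iterate_one, hd, (hg'' t).deriv]
    simpa [iteratedFDeriv_two_apply] using hHconv (p + t • v) v hv
  have := hconv.lt_slope_of_hasDerivAt (mem_univ 0) (mem_univ 1) one_pos (hg' 0)
  rw [slope_def_field] at this
  simp only [zero_smul, one_smul, add_zero, sub_zero, div_one,
    (hH1 p).hasGradientAt.fderiv_apply] at this
  simpa only [add_sub_cancel_left] using this

theorem exists_forall_inner_sub_le (hHc : Continuous H) (hs : Superlinear H) (q : Euc n) :
    ∃ p, ∀ p', ⟪q, p'⟫ - H p' ≤ ⟪q, p⟫ - H p := by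
  have hlim : Tendsto (fun p => H p - ⟪q, p⟫) (cocompact (Euc n)) atTop :=
    tendsto_atTop_mono (fun p => by linarith [real_inner_le_norm q p])
      (hs.tendsto_sub_mul_norm ‖q‖)
  obtain ⟨p, hp⟩ := Continuous.exists_forall_le (by fun_prop) hlim
  exact ⟨p, fun p' => by linarith [hp p']⟩

variable (H) in
/-- A point where the supremum defining `legendre H q` is attained (an arbitrary point if there
is none). -/
def legendreArgmax (q : Euc n) : Euc n :=
  Classical.epsilon fun p => ∀ p', ⟪q, p'⟫ - H p' ≤ ⟪q, p⟫ - H p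

theorem inner_sub_le_legendreArgmax (hHc : Continuous H) (hs : Superlinear H) (q p : Euc n) :
    ⟪q, p⟫ - H p ≤ ⟪q, legendreArgmax H q⟫ - H (legendreArgmax H q) :=
  Classical.epsilon_spec (exists_forall_inner_sub_le hHc hs q) p

theorem legendre_eq_inner_sub (hHc : Continuous H) (hs : Superlinear H) (q : Euc n) :
    legendre H q = ⟪q, legendreArgmax H q⟫ - H (legendreArgmax H q) :=
  le_antisymm (ciSup_le (inner_sub_le_legendreArgmax hHc hs q))
    (le_ciSup ⟨_, forall_mem_range.2 (inner_sub_le_legendreArgmax hHc hs q)⟩ _)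

theorem inner_sub_le_legendre (hHc : Continuous H) (hs : Superlinear H) (q p : Euc n) :
    ⟪q, p⟫ - H p ≤ legendre H q :=
  legendre_eq_inner_sub hHc hs q ▸ inner_sub_le_legendreArgmax hHc hs q p

theorem inner_le_legendre_sub (hHc : Continuous H) (hs : Superlinear H) (q q' : Euc n) :
    ⟪q' - q, legendreArgmax H q⟫ ≤ legendre H q' - legendre H q := by
  rw [legendre_eq_inner_sub hHc hs q, inner_sub_left]
  linarith [inner_sub_le_legendre hHc hs q' (legendreArgmax H q)]

theorem exists_norm_legendreArgmax_le (hHc : Continuous H) (hs : Superlinear H) (R : ℝ) :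
    ∃ B, ∀ q, ‖q‖ ≤ R → ‖legendreArgmax H q‖ ≤ B := by
  obtain ⟨C, hC⟩ := hs.exists_mul_norm_sub_le hHc (R + 1)
  refine ⟨C + H 0, fun q hq => ?_⟩
  have h0 := inner_sub_le_legendreArgmax hHc hs q 0
  have hinner : ⟪q, legendreArgmax H q⟫ ≤ R * ‖legendreArgmax H q‖ :=
    (real_inner_le_norm _ _).trans (mul_le_mul_of_nonneg_right hq (norm_nonneg _))
  simp only [inner_zero_right] at h0
  linarith [hC (legendreArgmax H q)]

theorem exists_mul_norm_sub_le_legendre (hHc : Continuous H) (hs : Superlinear H) {M : ℝ}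
    (hM : 0 ≤ M) : ∃ C, ∀ q, M * ‖q‖ - C ≤ legendre H q := by
  obtain ⟨C, hC⟩ := (isCompact_closedBall (0 : Euc n) M).bddAbove_image hHc.continuousOn
  refine ⟨C, fun q => ?_⟩
  -- test `legendre H q` against the point of norm `M` in the direction of `q`
  set p := (M * ‖q‖⁻¹) • q
  have hp : ‖p‖ ≤ M := by
    rw [norm_smul, Real.norm_of_nonneg (by positivity), mul_assoc]
    exact mul_le_of_le_one_right hM (inv_mul_le_one_of_le₀ le_rfl (norm_nonneg q))
  have hinner : ⟪q, p⟫ = M * ‖q‖ := by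
    rw [real_inner_smul_right, real_inner_self_eq_norm_sq]
    rcases eq_or_ne ‖q‖ 0 with h | h
    · simp [h]
    · field_simp
  have hHp : H p ≤ C := hC (mem_image_of_mem H (mem_closedBall_zero_iff.2 hp))
  linarith [inner_sub_le_legendre hHc hs q p]

theorem gradient_legendreArgmax (hH : ContDiff ℝ 2 H) (hs : Superlinear H) (q : Euc n) :
    gradient H (legendreArgmax H q) = q := by
  set p₀ := legendreArgmax H q
  have hlin : HasGradientAt (fun p => ⟪q, p⟫ - (⟪q, p₀⟫ - H p₀)) q p₀ := by
    rw [hasGradientAt_iff_hasFDerivAt]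
    exact ((InnerProductSpace.toDual ℝ (Euc n) q).hasFDerivAt).sub_const _
  refine (hlin.eq_of_le_of_eq ((hH.differentiable (by norm_num)) p₀).hasGradientAt
    (fun p => ?_) (by ring)).symm
  linarith [inner_sub_le_legendreArgmax hH.continuous hs q p]

theorem legendreArgmax_gradient (hH : ContDiff ℝ 2 H) (hHconv : PosDefHessian H)
    (hs : Superlinear H) (p : Euc n) : legendreArgmax H (gradient H p) = p := by
  by_contra hne
  have := inner_gradient_lt_sub hH hHconv hne
  rw [inner_sub_right] at this
  linarith [inner_sub_le_legendreArgmax hH.continuous hs (gradient H p) p]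

theorem inner_sub_lt_legendreArgmax (hH : ContDiff ℝ 2 H) (hHconv : PosDefHessian H)
    (hs : Superlinear H) {q p : Euc n} (hne : p ≠ legendreArgmax H q) :
    ⟪q, p⟫ - H p < ⟪q, legendreArgmax H q⟫ - H (legendreArgmax H q) := by
  have := inner_gradient_lt_sub hH hHconv hne
  rw [gradient_legendreArgmax hH hs, inner_sub_right] at this
  linarith

theorem continuous_legendreArgmax (hH : ContDiff ℝ 2 H) (hHconv : PosDefHessian H)
    (hs : Superlinear H) : Continuous (legendreArgmax H) := by
  refine continuous_iff_continuousAt.2 fun q => ?_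
  obtain ⟨B, hB⟩ := exists_norm_legendreArgmax_le hH.continuous hs (‖q‖ + 1)
  have hnear : ∀ᶠ q' in 𝓝 q, ‖q'‖ ≤ ‖q‖ + 1 :=
    (continuous_norm.tendsto q).eventually (eventually_le_nhds (lt_add_one ‖q‖))
  refine tendsto_of_forall_le_of_unique (F := fun q p => H p - ⟪q, p⟫) (by fun_prop)
    (isCompact_closedBall 0 B) (fun q' p => ?_)
    (hnear.mono fun q' hq' => mem_closedBall_zero_iff.2 (hB q' hq')) (fun p hp => ?_)
  · linarith [inner_sub_le_legendreArgmax hH.continuous hs q' p]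
  · linarith [inner_sub_lt_legendreArgmax hH hHconv hs hp]

theorem continuous_legendre (hH : ContDiff ℝ 2 H) (hHconv : PosDefHessian H)
    (hs : Superlinear H) : Continuous (legendre H) := by
  have hm := continuous_legendreArgmax hH hHconv hs
  rw [show legendre H = _ from funext (legendre_eq_inner_sub hH.continuous hs)]
  fun_prop

end Legendre

theorem forall_le_of_forall_ne_lt {α β : Type*} [Preorder β] {f : α → β} {a : α}
    (h : ∀ x, x ≠ a → f a < f x) (x : α) : f a ≤ f x :=
  (eq_or_ne x a).elim (fun hx => hx ▸ le_rfl) fun hx => (h x hx).le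

section HopfLax

variable {n : ℕ} {T : ℝ} {H : Euc n → ℝ}

theorem inner_le_smul_legendre_sub (hHc : Continuous H) (hs : Superlinear H) (hT : 0 < T)
    (w w' : Euc n) :
    ⟪w' - w, legendreArgmax H (T⁻¹ • w)⟫ ≤
      T * legendre H (T⁻¹ • w') - T * legendre H (T⁻¹ • w) := by
  have h := mul_le_mul_of_nonneg_left (inner_le_legendre_sub hHc hs (T⁻¹ • w) (T⁻¹ • w')) hT.le
  rwa [← smul_sub, real_inner_smul_left, ← mul_assoc, mul_inv_cancel₀ hT.ne', one_mul,
    mul_sub] at h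

theorem smul_legendre_sub_le_inner (hHc : Continuous H) (hs : Superlinear H) (hT : 0 < T)
    (w w' : Euc n) :
    T * legendre H (T⁻¹ • w') - T * legendre H (T⁻¹ • w) ≤
      ⟪w' - w, legendreArgmax H (T⁻¹ • w')⟫ := by
  have h := inner_le_smul_legendre_sub hHc hs hT w' w
  rw [← neg_sub w' w, inner_neg_left] at h
  linarith

theorem hasGradientAt_sub_smul_legendre (hH : ContDiff ℝ 2 H) (hHconv : PosDefHessian H)
    (hs : Superlinear H) (hT : 0 < T) (c : ℝ) (z x : Euc n) :
    HasGradientAt (fun x' => c - T * legendre H (T⁻¹ • (z - x')))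
      (legendreArgmax H (T⁻¹ • (z - x))) x := by
  have hm := continuous_legendreArgmax hH hHconv hs
  refine hasGradientAt_of_inner_le_sub_le_inner
    ((show Continuous fun x' => legendreArgmax H (T⁻¹ • (z - x')) by fun_prop).tendsto x)
    tendsto_const_nhds (fun x' => ?_) (fun x' => ?_)
  · have h := inner_le_smul_legendre_sub hH.continuous hs hT (z - x') (z - x)
    rw [sub_sub_sub_cancel_left] at h
    linarith
  · have h := smul_legendre_sub_le_inner hH.continuous hs hT (z - x') (z - x)
    rw [sub_sub_sub_cancel_left] at h
    linarith

variable (T H) in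
/-- `Splus T (legendre H) u0 z` is, by definition, `⨅ x, hopfLaxCost T H u0 z x`. -/
def hopfLaxCost (u0 : Euc n → ℝ) (z x : Euc n) : ℝ :=
  u0 x + T * legendre H (T⁻¹ • (z - x))

theorem hopfLaxCost_eq_of_sub_eq (hT : T ≠ 0) {u0 : Euc n → ℝ} {z x₀ g : Euc n}
    (h : z - x₀ = T • g) (x : Euc n) :
    hopfLaxCost T H u0 z x = u0 x + T * legendre H (g + T⁻¹ • (x₀ - x)) := by
  rw [hopfLaxCost, ← sub_add_sub_cancel z x₀ x, h, smul_add, inv_smul_smul₀ hT]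

theorem Splus_eq_hopfLaxCost_of_forall_le {u0 : Euc n → ℝ} {z w : Euc n}
    (hw : ∀ x, hopfLaxCost T H u0 z w ≤ hopfLaxCost T H u0 z x) :
    Splus T (legendre H) u0 z = hopfLaxCost T H u0 z w :=
  le_antisymm (ciInf_le ⟨_, forall_mem_range.2 hw⟩ w) (le_ciInf hw)

theorem Splus_le_hopfLaxCost_of_forall_le {u0 : Euc n → ℝ} {z w : Euc n}
    (hw : ∀ x, hopfLaxCost T H u0 z w ≤ hopfLaxCost T H u0 z x) (x : Euc n) :
    Splus T (legendre H) u0 z ≤ hopfLaxCost T H u0 z x :=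
  (Splus_eq_hopfLaxCost_of_forall_le hw).trans_le (hw x)

theorem exists_norm_sub_le_hopfLaxCost (hHc : Continuous H) (hs : Superlinear H) (hT : 0 < T)
    {K : NNReal} {u0 : Euc n → ℝ} (hK : LipschitzWith K u0) :
    ∃ C, ∀ z x, u0 z + ‖z - x‖ - C ≤ hopfLaxCost T H u0 z x := by
  obtain ⟨C, hC⟩ := exists_mul_norm_sub_le_legendre hHc hs (M := K + 1) (by positivity)
  refine ⟨T * C, fun z x => ?_⟩
  have hL := mul_le_mul_of_nonneg_left (hC (T⁻¹ • (z - x))) hT.le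
  rw [norm_smul, Real.norm_of_nonneg (inv_nonneg.2 hT.le)] at hL
  have hu := hK.dist_le_mul z x
  rw [Real.dist_eq, dist_eq_norm] at hu
  have hTL : T * ((K + 1) * (T⁻¹ * ‖z - x‖) - C) = (K + 1) * ‖z - x‖ - T * C := by
    field_simp
  rw [hopfLaxCost]
  linarith [le_abs_self (u0 z - u0 x)]

theorem continuous_hopfLaxCost (hH : ContDiff ℝ 2 H) (hHconv : PosDefHessian H)
    (hs : Superlinear H) {u0 : Euc n → ℝ} (hu0 : Continuous u0) :
    Continuous (Function.uncurry (hopfLaxCost T H u0)) := by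
  have hL := continuous_legendre hH hHconv hs
  unfold hopfLaxCost
  fun_prop

theorem exists_forall_hopfLaxCost_le (hH : ContDiff ℝ 2 H) (hHconv : PosDefHessian H)
    (hs : Superlinear H) (hT : 0 < T) {K : NNReal} {u0 : Euc n → ℝ} (hK : LipschitzWith K u0)
    (z : Euc n) : ∃ w, ∀ x, hopfLaxCost T H u0 z w ≤ hopfLaxCost T H u0 z x := by
  obtain ⟨C, hC⟩ := exists_norm_sub_le_hopfLaxCost hH.continuous hs hT hK
  refine exists_forall_le_of_norm_sub_le (C := ‖z‖ + C - u0 z)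
    ((continuous_hopfLaxCost hH hHconv hs hK.continuous).comp (Continuous.prodMk_right z))
    fun x => ?_
  linarith [hC z x, norm_sub_norm_le x z, norm_sub_rev x z]

theorem hasGradientAt_hopfLaxCost_left (hH : ContDiff ℝ 2 H) (hHconv : PosDefHessian H)
    (hs : Superlinear H) (hT : 0 < T) (u0 : Euc n → ℝ) (v z : Euc n) :
    HasGradientAt (fun z' => hopfLaxCost T H u0 z' v) (legendreArgmax H (T⁻¹ • (z - v))) z := by
  have hm := continuous_legendreArgmax hH hHconv hs
  refine hasGradientAt_of_inner_le_sub_le_inner tendsto_const_nhds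
    ((show Continuous fun z' => legendreArgmax H (T⁻¹ • (z' - v)) by fun_prop).tendsto z)
    (fun z' => ?_) (fun z' => ?_)
  · have h := inner_le_smul_legendre_sub hH.continuous hs hT (z - v) (z' - v)
    rw [sub_sub_sub_cancel_right] at h
    simp only [hopfLaxCost]
    linarith
  · have h := smul_legendre_sub_le_inner hH.continuous hs hT (z - v) (z' - v)
    rw [sub_sub_sub_cancel_right] at h
    simp only [hopfLaxCost]
    linarith

theorem legendreArgmax_mem_subdiff (hH : ContDiff ℝ 2 H) (hHconv : PosDefHessian H)
    (hs : Superlinear H) (hT : 0 < T) {u0 : Euc n → ℝ} {z x₀ : Euc n}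
    (hmin : ∀ x, hopfLaxCost T H u0 z x₀ ≤ hopfLaxCost T H u0 z x) :
    legendreArgmax H (T⁻¹ • (z - x₀)) ∈ subdiff u0 x₀ := by
  have hm := continuous_legendreArgmax hH hHconv hs
  have hgrad := hasGradientAt_sub_smul_legendre hH hHconv hs hT (hopfLaxCost T H u0 z x₀) z
  refine ⟨_, contDiff_one_of_hasGradientAt (by fun_prop) hgrad, (hgrad x₀).gradient,
    fun x => ?_, by simp [hopfLaxCost]⟩
  have h := hmin x
  simp only [hopfLaxCost] at h ⊢
  linarith

theorem tendsto_of_forall_hopfLaxCost_le (hH : ContDiff ℝ 2 H) (hHconv : PosDefHessian H)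
    (hs : Superlinear H) (hT : 0 < T) {K : NNReal} {u0 : Euc n → ℝ} (hK : LipschitzWith K u0)
    {w : Euc n → Euc n} (hw : ∀ z x, hopfLaxCost T H u0 z (w z) ≤ hopfLaxCost T H u0 z x)
    {z x₀ : Euc n} (huniq : ∀ x, x ≠ x₀ → hopfLaxCost T H u0 z x₀ < hopfLaxCost T H u0 z x) :
    Tendsto w (𝓝 z) (𝓝 x₀) := by
  obtain ⟨C, hC⟩ := exists_norm_sub_le_hopfLaxCost hH.continuous hs hT hK
  have hcost := continuous_hopfLaxCost (T := T) hH hHconv hs hK.continuous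
  -- comparing with the competitor `x₀` bounds the minimizers locally uniformly
  set g : Euc n → ℝ := fun z' => ‖z'‖ + hopfLaxCost T H u0 z' x₀ - u0 z' + C
  have hg : Continuous g := by
    have := hcost.comp (Continuous.prodMk_left x₀)
    have := hK.continuous
    fun_prop
  have hbound : ∀ z', ‖w z'‖ ≤ g z' := fun z' => by
    linarith [hC z' (w z'), hw z' x₀, norm_sub_norm_le (w z') z', norm_sub_rev (w z') z']
  refine tendsto_of_forall_le_of_unique hcost (isCompact_closedBall 0 (g z + 1)) hw ?_ huniq
  filter_upwards [(hg.tendsto z).eventually (eventually_le_nhds (lt_add_one (g z)))] with z' hz'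
  exact mem_closedBall_zero_iff.2 ((hbound z').trans hz')

theorem hasGradientAt_Splus_of_forall_lt (hH : ContDiff ℝ 2 H) (hHconv : PosDefHessian H)
    (hs : Superlinear H) (hT : 0 < T) {K : NNReal} {u0 : Euc n → ℝ} (hK : LipschitzWith K u0)
    {z x₀ : Euc n} (huniq : ∀ x, x ≠ x₀ → hopfLaxCost T H u0 z x₀ < hopfLaxCost T H u0 z x) :
    HasGradientAt (Splus T (legendre H) u0) (legendreArgmax H (T⁻¹ • (z - x₀))) z := by
  choose w hw using exists_forall_hopfLaxCost_le hH hHconv hs hT hK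
  have hmin := forall_le_of_forall_ne_lt huniq
  have hm := continuous_legendreArgmax hH hHconv hs
  have hwz := tendsto_of_forall_hopfLaxCost_le hH hHconv hs hT hK hw huniq
  -- the minimizer `w y` for `y` and the competitor `x₀` for `y` squeeze the increment at `z`
  refine hasGradientAt_of_inner_le_sub_le_inner
    (((show Continuous fun x => legendreArgmax H (T⁻¹ • (z - x)) by fun_prop).tendsto x₀).comp
      hwz)
    ((show Continuous fun y => legendreArgmax H (T⁻¹ • (y - x₀)) by fun_prop).tendsto z)
    (fun y => ?_) (fun y => ?_)
  · have h := inner_le_smul_legendre_sub hH.continuous hs hT (z - w y) (y - w y)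
    rw [sub_sub_sub_cancel_right] at h
    have h1 := Splus_le_hopfLaxCost_of_forall_le (hw z) (w y)
    rw [Splus_eq_hopfLaxCost_of_forall_le (hw y)]
    simp only [hopfLaxCost] at h1 ⊢
    simp only [Function.comp_apply]
    linarith
  · have h := smul_legendre_sub_le_inner hH.continuous hs hT (z - x₀) (y - x₀)
    rw [sub_sub_sub_cancel_right] at h
    have h1 := Splus_le_hopfLaxCost_of_forall_le (hw y) x₀
    rw [Splus_eq_hopfLaxCost_of_forall_le hmin]
    simp only [hopfLaxCost] at h1 ⊢
    linarith

theorem eq_sub_smul_gradient_of_forall_hopfLaxCost_le (hH : ContDiff ℝ 2 H)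
    (hHconv : PosDefHessian H) (hs : Superlinear H) (hT : 0 < T) {K : NNReal} {u0 : Euc n → ℝ} (hK : LipschitzWith K u0)
    {z v : Euc n} (hdiff : DifferentiableAt ℝ (Splus T (legendre H) u0) z)
    (hv : ∀ x, hopfLaxCost T H u0 z v ≤ hopfLaxCost T H u0 z x) :
    v = z - T • gradient H (gradient (Splus T (legendre H) u0) z) := by
  have hle : ∀ z', Splus T (legendre H) u0 z' ≤ hopfLaxCost T H u0 z' v := fun z' =>
    have ⟨_, hw⟩ := exists_forall_hopfLaxCost_le hH hHconv hs hT hK z'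
    Splus_le_hopfLaxCost_of_forall_le hw v
  have hgrad := hdiff.hasGradientAt.eq_of_le_of_eq
    (hasGradientAt_hopfLaxCost_left hH hHconv hs hT u0 v z) hle
    (Splus_eq_hopfLaxCost_of_forall_le hv)
  rw [hgrad, gradient_legendreArgmax hH hs, smul_inv_smul₀ hT.ne', sub_sub_cancel]

theorem hopfLaxCost_lt_of_differentiableAt (hH : ContDiff ℝ 2 H) (hHconv : PosDefHessian H)
    (hs : Superlinear H) (hT : 0 < T) {K : NNReal} {u0 : Euc n → ℝ} (hK : LipschitzWith K u0)
    {z : Euc n} (hdiff : DifferentiableAt ℝ (Splus T (legendre H) u0) z) {x : Euc n}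
    (hx : x ≠ z - T • gradient H (gradient (Splus T (legendre H) u0) z)) :
    hopfLaxCost T H u0 z (z - T • gradient H (gradient (Splus T (legendre H) u0) z)) <
      hopfLaxCost T H u0 z x := by
  obtain ⟨w, hw⟩ := exists_forall_hopfLaxCost_le hH hHconv hs hT hK z
  have hw₀ := eq_sub_smul_gradient_of_forall_hopfLaxCost_le hH hHconv hs hT hK hdiff hw
  rw [← hw₀] at hx ⊢
  refine (hw x).lt_of_ne fun heq => hx ?_
  have hxmin : ∀ y, hopfLaxCost T H u0 z x ≤ hopfLaxCost T H u0 z y := heq ▸ hw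
  rw [eq_sub_smul_gradient_of_forall_hopfLaxCost_le hH hHconv hs hT hK hdiff hxmin, hw₀]

end HopfLax

theorem XT_subdifferential_characterization_general
    {n : ℕ} (T : ℝ) (hT : 0 < T)
    (H : Euc n → ℝ) (hH : ContDiff ℝ 2 H)
    (hHconv : PosDefHessian H) (hHsuper : Superlinear H)
    (uT : Euc n → ℝ)
    (u0 : Euc n → ℝ) (hu0 : IsLip u0) (hu0mem : Splus T (legendre H) u0 = uT)
    (x0 : Euc n) :
    x0 ∈ XT T H uT ↔
      ∃ p0 ∈ subdiff u0 x0, ∃ c0 : ℝ,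
        u0 x0 = -(T * legendre H (gradient H p0)) + c0 ∧
        ∀ x : Euc n, x ≠ x0 →
          -(T * legendre H (gradient H p0 + T⁻¹ • (x0 - x))) + c0 < u0 x := by
  obtain ⟨K, hK⟩ := hu0
  subst hu0mem
  constructor
  · rintro ⟨z, hz, rfl⟩
    set p0 := gradient (Splus T (legendre H) u0) z
    have hz0 : z - (z - T • gradient H p0) = T • gradient H p0 := sub_sub_cancel _ _
    have hlt := fun x => hopfLaxCost_lt_of_differentiableAt hH hHconv hHsuper hT hK hz (x := x)
    have hmin := forall_le_of_forall_ne_lt hlt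
    have hsub := legendreArgmax_mem_subdiff hH hHconv hHsuper hT hmin
    rw [hz0, inv_smul_smul₀ hT.ne', legendreArgmax_gradient hH hHconv hHsuper] at hsub
    refine ⟨p0, hsub, Splus T (legendre H) u0 z, ?_, fun x hx => ?_⟩
    · rw [Splus_eq_hopfLaxCost_of_forall_le hmin, hopfLaxCost_eq_of_sub_eq hT.ne' hz0]
      simp [p0]
    · have h := hlt x hx
      rw [← Splus_eq_hopfLaxCost_of_forall_le hmin, hopfLaxCost_eq_of_sub_eq hT.ne' hz0] at h
      linarith
  · rintro ⟨p0, -, c0, hx0, hlt⟩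
    obtain ⟨z, hz⟩ : ∃ z, z - x0 = T • gradient H p0 := ⟨_, add_sub_cancel_left x0 _⟩
    have huniq : ∀ x, x ≠ x0 → hopfLaxCost T H u0 z x0 < hopfLaxCost T H u0 z x := fun x hx => by
      simp only [hopfLaxCost_eq_of_sub_eq hT.ne' hz, sub_self, smul_zero, add_zero]
      linarith [hlt x hx]
    have hgrad := hasGradientAt_Splus_of_forall_lt hH hHconv hHsuper hT hK huniq
    rw [hz, inv_smul_smul₀ hT.ne', legendreArgmax_gradient hH hHconv hHsuper] at hgrad
    exact ⟨z, hgrad.differentiableAt, by rw [hgrad.gradient, ← hz, sub_sub_cancel]⟩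

/-- For `u0 ∈ I_T(u_T)`, a point `x0` belongs to `X_T(u_T)` iff there exist
`p0 ∈ D⁻u0(x0)` and `c0 ∈ ℝ` such that `u0(x0) = -T·L(∇H(p0)) + c0` and
`u0(x) > -T·L(∇H(p0) + (x0-x)/T) + c0` for all `x ≠ x0`. -/
theorem XT_subdifferential_characterization
    {n : ℕ} (hn : 0 < n) (T : ℝ) (hT : 0 < T)
    (H : Euc n → ℝ) (hH : ContDiff ℝ 2 H)
    (hHconv : PosDefHessian H) (hHsuper : Superlinear H)
    (uT : Euc n → ℝ) (huT : IsLip uT)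
    (hreach : ∃ u0 : Euc n → ℝ, IsLip u0 ∧ Splus T (legendre H) u0 = uT)
    (u0 : Euc n → ℝ) (hu0 : IsLip u0) (hu0mem : Splus T (legendre H) u0 = uT)
    (x0 : Euc n) :
    x0 ∈ XT T H uT ↔
      ∃ p0 ∈ subdiff u0 x0, ∃ c0 : ℝ,
        u0 x0 = -(T * legendre H (gradient H p0)) + c0 ∧
        ∀ x : Euc n, x ≠ x0 →
          -(T * legendre H (gradient H p0 + T⁻¹ • (x0 - x))) + c0 < u0 x :=
  XT_subdifferential_characterization_general T hT H hH hHconv hHsuper uT u0 hu0 hu0mem x0
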